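/- Let k be a field, n ≥ 1, P ∈ k[z] of degree 2 with leading coefficient c ∈ k*, char k ≠ 2. Let ω = ax + b²y + bP(x) ∈ k[a,b][x,y], τ_a = y/a + P(x)/(ab) − (1/(ab))P(ω/a) ∈ k[a^{±1},b][x,y], f = x/(ab²) − P(x/a)/(ab), and f̂ = f − (a/b²)·x·P(x/a), all in k[a^{±1},b^{±1}][x]. Set Δ = (a⁵/(2c))τ_a and ω̂ = ω + Δ. With f_b = a³f and f̂_b = a³f̂ in k[a,b^{±1}][x], one has f̂_b(ω̂) ≡ f_b(ω) (mod a³) in k[a,b^{±1}][x,y]. -/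
import Mathlib


noncomputable section
open MvPolynomial

abbrev K4 (k : Type) [Field k] := FractionRing (MvPolynomial (Fin 4) k)

def av (k : Type) [Field k] : K4 k := algebraMap (MvPolynomial (Fin 4) k) (K4 k) (X 0)
def bv (k : Type) [Field k] : K4 k := algebraMap (MvPolynomial (Fin 4) k) (K4 k) (X 1)
def xv (k : Type) [Field k] : K4 k := algebraMap (MvPolynomial (Fin 4) k) (K4 k) (X 2)
def yv (k : Type) [Field k] : K4 k := algebraMap (MvPolynomial (Fin 4) k) (K4 k) (X 3)

/-- Evaluation of `P ∈ k[x]` at an element of `k(a,b,x,y)`. -/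
def pe16 (k : Type) [Field k] (P : Polynomial k) (t : K4 k) : K4 k := Polynomial.aeval t P

/-- `ω = ax + b²y + bP(x)`. -/
def om16 (k : Type) [Field k] (P : Polynomial k) : K4 k :=
  av k * xv k + (bv k) ^ 2 * yv k + bv k * pe16 k P (xv k)

/-- `τₐ = y/a + P(x)/(ab) − (1/(ab))P(ω/a)`. -/
def ta16 (k : Type) [Field k] (P : Polynomial k) : K4 k :=
  yv k / av k + pe16 k P (xv k) / (av k * bv k)
    - (1 / (av k * bv k)) * pe16 k P (om16 k P / av k)

/-- `f_b = a³f` as a polynomial function in `x`, where `f = x/(ab²) − P(x/a)/(ab)`. -/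
def Fb16 (k : Type) [Field k] (P : Polynomial k) (t : K4 k) : K4 k :=
  (av k) ^ 3 * (t / (av k * (bv k) ^ 2) - pe16 k P (t / av k) / (av k * bv k))

/-- `f̂_b = a³f̂` as a polynomial function in `x`, where `f̂ = f − (a/b²)·x·P(x/a)`. -/
def Fbh16 (k : Type) [Field k] (P : Polynomial k) (t : K4 k) : K4 k :=
  (av k) ^ 3 * (t / (av k * (bv k) ^ 2) - pe16 k P (t / av k) / (av k * bv k)
    - (av k / (bv k) ^ 2) * t * pe16 k P (t / av k))

/- ### Generic field identities, proved by explicit linear-combination certificates -/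

section Generic
variable {F : Type} [Field F]

lemma stage1 (a b cc dd ee y px om G G2 : F)
    (ha : a ≠ 0) (hb : b ≠ 0) (hcc : cc ≠ 0) (h2 : (2:F) ≠ 0)
    (hG : G = a^2*y/(2*cc) + a^2*px/(2*cc*b)
        - (cc*om^2 + dd*a*om + ee*a^2)/(2*cc*b))
    (hG2 : G2 = a*y/(2*cc) + a*px/(2*cc*b) - (dd*om + ee*a)/(2*cc*b)) :
    G = a*G2 - om^2/(2*b) := by
  subst hG hG2
  linear_combination ((-1:F)*om^2*(b⁻¹)*((2:F)⁻¹)) * (mul_inv_cancel₀ hcc)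

lemma stage2 (a b cc dd ee y px om G : F)
    (ha : a ≠ 0) (hb : b ≠ 0) (hcc : cc ≠ 0) (h2 : (2:F) ≠ 0)
    (hG : G = a^2*y/(2*cc) + a^2*px/(2*cc*b)
        - (cc*om^2 + dd*a*om + ee*a^2)/(2*cc*b)) :
    a^5/(2*cc) * (y/a + px/(a*b) - 1/(a*b)*(cc*(om/a)^2 + dd*(om/a) + ee)) = a^2*G := by
  subst hG
  linear_combination ((-1:F)*a^2*cc*om^2*(b⁻¹)*(cc⁻¹)*((2:F)⁻¹) + (-1:F)*a^3*dd*om*(b⁻¹)*(cc⁻¹)*((2:F)⁻¹) + (-1:F)*a^3*cc*om^2*(a⁻¹)*(b⁻¹)*(cc⁻¹)*((2:F)⁻¹) + (1:F)*a^4*px*(b⁻¹)*(cc⁻¹)*((2:F)⁻¹) + (1:F)*a^4*y*(cc⁻¹)*((2:F)⁻¹) + (-1:F)*a^4*ee*(b⁻¹)*(cc⁻¹)*((2:F)⁻¹) + (-1:F)*a^4*dd*om*(a⁻¹)*(b⁻¹)*(cc⁻¹)*((2:F)⁻¹) + (-1:F)*a^4*cc*om^2*(a⁻¹)^2*(b⁻¹)*(cc⁻¹)*((2:F)⁻¹))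 * (mul_inv_cancel₀ ha)

set_option maxHeartbeats 1000000 in
lemma stage3 (a b cc dd ee om g2 G M H : F)
    (ha : a ≠ 0) (hb : b ≠ 0) (hcc : cc ≠ 0) (h2 : (2:F) ≠ 0)
    (hrel : G = a*g2 - om^2/(2*b))
    (hM : M = om*(2*cc*om + dd*a + cc*a^2*G) + (cc*(om + a^2*G)^2 + dd*a*(om + a^2*G) + ee*a^2))
    (hH : H = a*G/b^2 - 2*cc*om*g2/b - dd*G/b - a*cc*G^2/b - a*G*M/b^2
        - om*(dd*om + ee*a)/b^2) :
    a^3 * ((om + a^2*G)/(a*b^2)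
        - (cc*((om + a^2*G)/a)^2 + dd*((om + a^2*G)/a) + ee)/(a*b)
        - a/b^2 * (om + a^2*G) * (cc*((om + a^2*G)/a)^2 + dd*((om + a^2*G)/a) + ee))
      - a^3 * (om/(a*b^2) - (cc*(om/a)^2 + dd*(om/a) + ee)/(a*b))
      = a^3 * H := by
  subst hH hM hrel
  linear_combination ((-1:F)*a^2*cc*om^3*(b⁻¹)^2 + (2:F)*a^2*cc*om^3*(b⁻¹)^2*((2:F)⁻¹) + (-1:F)*a^3*dd*om^2*(b⁻¹)^2 + (1:F)*a^3*dd*om^2*(b⁻¹)^2*((2:F)⁻¹) + (-2:F)*a^3*cc*om*g2*(b⁻¹) + (-1:F)*a^3*cc*om^3*(a⁻¹)*(b⁻¹)^2 + (2:F)*a^3*cc*om^3*(a⁻¹)*(b⁻¹)^2*((2:F)⁻¹) + (-1:F)*a^4*om^2*(b⁻¹)^3*((2:F)⁻¹) + (-1:F)*a^4*dd*g2*(b⁻¹) + (1:F)*a^4*dd*om^2*(a⁻¹)*(b⁻¹)^2*((2:F)⁻¹) + (-2:F)*a^4*cc*om*g2*(a⁻¹)*(b⁻¹) + (2:F)*a^4*cc*om^3*(a⁻¹)^2*(b⁻¹)^2*((2:F)⁻¹)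 + (3:F)*a^4*cc*om^4*(b⁻¹)^3*((2:F)⁻¹) + (-1:F)*a^4*cc*om^4*(b⁻¹)^3*((2:F)⁻¹)^2 + (1:F)*a^5*g2*(b⁻¹)^2 + (-1:F)*a^5*dd*g2*(a⁻¹)*(b⁻¹) + (2:F)*a^5*dd*om^3*(b⁻¹)^3*((2:F)⁻¹) + (-2:F)*a^5*cc*om*g2*(a⁻¹)^2*(b⁻¹) + (-3:F)*a^5*cc*om^2*g2*(b⁻¹)^2 + (2:F)*a^5*cc*om^2*g2*(b⁻¹)^2*((2:F)⁻¹) + (3:F)*a^5*cc*om^4*(a⁻¹)*(b⁻¹)^3*((2:F)⁻¹) + (-1:F)*a^5*cc*om^4*(a⁻¹)*(b⁻¹)^3*((2:F)⁻¹)^2 + (-2:F)*a^6*dd*om*g2*(b⁻¹)^2 + (-1:F)*a^6*cc*g2^2*(b⁻¹) + (-3:F)*a^6*cc*om^2*g2*(a⁻¹)*(b⁻¹)^2 + (2:F)*a^6*cc*om^2*g2*(a⁻¹)*(b⁻¹)^2*((2:F)⁻¹) + (-1:F)*a^6*cc*om^4*(a⁻¹)^2*(b⁻¹)^3*((2:F)⁻¹)^2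 + (-3:F)*a^6*cc*om^5*(b⁻¹)^4*((2:F)⁻¹)^2 + (-1:F)*a^7*dd*om^4*(b⁻¹)^4*((2:F)⁻¹)^2 + (-1:F)*a^7*cc*g2^2*(a⁻¹)*(b⁻¹) + (2:F)*a^7*cc*om^2*g2*(a⁻¹)^2*(b⁻¹)^2*((2:F)⁻¹) + (6:F)*a^7*cc*om^3*g2*(b⁻¹)^3*((2:F)⁻¹) + (-3:F)*a^7*cc*om^5*(a⁻¹)*(b⁻¹)^4*((2:F)⁻¹)^2 + (2:F)*a^8*dd*om^2*g2*(b⁻¹)^3*((2:F)⁻¹) + (-1:F)*a^8*cc*g2^2*(a⁻¹)^2*(b⁻¹) + (-3:F)*a^8*cc*om*g2^2*(b⁻¹)^2 + (6:F)*a^8*cc*om^3*g2*(a⁻¹)*(b⁻¹)^3*((2:F)⁻¹) + (1:F)*a^8*cc*om^6*(b⁻¹)^5*((2:F)⁻¹)^3 + (-1:F)*a^9*dd*g2^2*(b⁻¹)^2 + (-3:F)*a^9*cc*om*g2^2*(a⁻¹)*(b⁻¹)^2 + (-3:F)*a^9*cc*om^4*g2*(b⁻¹)^4*((2:F)⁻¹)^2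 + (1:F)*a^9*cc*om^6*(a⁻¹)*(b⁻¹)^5*((2:F)⁻¹)^3 + (3:F)*a^10*cc*om^2*g2^2*(b⁻¹)^3*((2:F)⁻¹) + (-3:F)*a^10*cc*om^4*g2*(a⁻¹)*(b⁻¹)^4*((2:F)⁻¹)^2 + (-1:F)*a^11*cc*g2^3*(b⁻¹)^2 + (3:F)*a^11*cc*om^2*g2^2*(a⁻¹)*(b⁻¹)^3*((2:F)⁻¹) + (-1:F)*a^12*cc*g2^3*(a⁻¹)*(b⁻¹)^2) * (mul_inv_cancel₀ ha) + ((1:F)*a^2*cc*om^3*(b⁻¹)^2) * (mul_inv_cancel₀ h2)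

end Generic

/- ### Explicit witnesses in `k(a,b,x,y)` -/

/-- `P(x)` written out explicitly. -/
def wPx (k : Type) [Field k] (c d e : k) : K4 k :=
  algebraMap k (K4 k) c * (xv k) ^ 2 + algebraMap k (K4 k) d * xv k + algebraMap k (K4 k) e

/-- `ω` written out explicitly. -/
def wOm (k : Type) [Field k] (c d e : k) : K4 k :=
  av k * xv k + (bv k) ^ 2 * yv k + bv k * wPx k c d e

/-- `G = Δ/a²`. -/
def wG (k : Type) [Field k] (c d e : k) : K4 k :=
  (av k)^2 * yv k / (2 * algebraMap k (K4 k) c)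
    + (av k)^2 * wPx k c d e / (2 * algebraMap k (K4 k) c * bv k)
    - (algebraMap k (K4 k) c * (wOm k c d e)^2 + algebraMap k (K4 k) d * av k * wOm k c d e
        + algebraMap k (K4 k) e * (av k)^2) / (2 * algebraMap k (K4 k) c * bv k)

/-- `G₂ = (G + ω²/(2b))/a`. -/
def wG2 (k : Type) [Field k] (c d e : k) : K4 k :=
  av k * yv k / (2 * algebraMap k (K4 k) c)
    + av k * wPx k c d e / (2 * algebraMap k (K4 k) c * bv k)
    - (algebraMap k (K4 k) d * wOm k c d e + algebraMap k (K4 k) e * av k)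
        / (2 * algebraMap k (K4 k) c * bv k)

/-- `M = ω(2cω + ad + ca²G) + Q(ω + a²G)`. -/
def wM (k : Type) [Field k] (c d e : k) : K4 k :=
  wOm k c d e * (2 * algebraMap k (K4 k) c * wOm k c d e
      + algebraMap k (K4 k) d * av k + algebraMap k (K4 k) c * (av k)^2 * wG k c d e)
    + (algebraMap k (K4 k) c * (wOm k c d e + (av k)^2 * wG k c d e)^2
      + algebraMap k (K4 k) d * av k * (wOm k c d e + (av k)^2 * wG k c d e)
      + algebraMap k (K4 k) e * (av k)^2)

/-- The quotient `h`. -/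
def wH (k : Type) [Field k] (c d e : k) : K4 k :=
  av k * wG k c d e / (bv k)^2
    - 2 * algebraMap k (K4 k) c * wOm k c d e * wG2 k c d e / bv k
    - algebraMap k (K4 k) d * wG k c d e / bv k
    - av k * algebraMap k (K4 k) c * (wG k c d e)^2 / bv k
    - av k * wG k c d e * wM k c d e / (bv k)^2
    - wOm k c d e * (algebraMap k (K4 k) d * wOm k c d e + algebraMap k (K4 k) e * av k)
        / (bv k)^2

/-- let `char k ≠ 2`, `n ≥ 1`, `P ∈ k[z]` of degree `2` with leading
coefficient `c ≠ 0`.  With `Δ = (a⁵/(2c))τₐ` and `ω̂ = ω + Δ`, one has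
`f̂_b(ω̂) ≡ f_b(ω) (mod a³)` in `k[a,b^{±1}][x,y]`, viewed inside `k(a,b,x,y)`:
the difference is `a³·h` for some `h ∈ k[a,b^{±1}][x,y]`. -/
theorem stmt16 (k : Type) [Field k] (hk : (2 : k) ≠ 0) (n : ℕ) (hn : 1 ≤ n)
    (P : Polynomial k) (hP : P.natDegree = 2) (c : k) (hc : P.leadingCoeff = c)
    (hc0 : c ≠ 0) :
    ∃ h ∈ Algebra.adjoin k ({av k, bv k, (bv k)⁻¹, xv k, yv k} : Set (K4 k)),
      Fbh16 k P (om16 k P + ((av k) ^ 5 / (2 * algebraMap k (K4 k) c)) * ta16 k P)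
          - Fb16 k P (om16 k P)
        = (av k) ^ 3 * h := by
  set d := P.coeff 1 with hd
  set e := P.coeff 0 with he
  have hc2 : P.coeff 2 = c := by rwa [Polynomial.leadingCoeff, hP] at hc
  have ha0 : av k ≠ 0 := by
    simp [av, IsFractionRing.to_map_eq_zero_iff, MvPolynomial.X_ne_zero]
  have hb0 : bv k ≠ 0 := by
    simp [bv, IsFractionRing.to_map_eq_zero_iff, MvPolynomial.X_ne_zero]
  have hcC : algebraMap k (K4 k) c ≠ 0 := by simpa using hc0
  have h2C : (2 : K4 k) ≠ 0 := by
    have : algebraMap k (K4 k) (2 : k) ≠ 0 := by simpa using hk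
    simpa [map_ofNat] using this
  have hpe : ∀ t : K4 k,
      pe16 k P t = algebraMap k (K4 k) c * t ^ 2 + algebraMap k (K4 k) d * t
        + algebraMap k (K4 k) e := by
    intro t
    rw [pe16, Polynomial.aeval_eq_sum_range, hP]
    simp [Finset.sum_range_succ, Algebra.smul_def, hc2]
    ring
  set A := Algebra.adjoin k ({av k, bv k, (bv k)⁻¹, xv k, yv k} : Set (K4 k)) with hA
  have haA : av k ∈ A := Algebra.subset_adjoin (by simp)
  have hbA : bv k ∈ A := Algebra.subset_adjoin (by simp)
  have hbiA : (bv k)⁻¹ ∈ A := Algebra.subset_adjoin (by simp)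
  have hxA : xv k ∈ A := Algebra.subset_adjoin (by simp)
  have hyA : yv k ∈ A := Algebra.subset_adjoin (by simp)
  have hCm : ∀ r : k, algebraMap k (K4 k) r ∈ A := fun r => Subalgebra.algebraMap_mem A r
  have h2A : (2 : K4 k) ∈ A := by simpa [map_ofNat] using hCm 2
  have hdiv : ∀ u v : K4 k, u ∈ A → v⁻¹ ∈ A → u / v ∈ A := by
    intro u v hu hv; rw [div_eq_mul_inv]; exact mul_mem hu hv
  have h2I : (2 : K4 k)⁻¹ ∈ A := by
    have := hCm (2⁻¹ : k)
    rwa [map_inv₀, map_ofNat] at this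
  have hcI : (algebraMap k (K4 k) c)⁻¹ ∈ A := by
    have := hCm (c⁻¹ : k); rwa [map_inv₀] at this
  have h2cI : (2 * algebraMap k (K4 k) c)⁻¹ ∈ A := by
    rw [mul_inv]; exact mul_mem h2I hcI
  have h2cbI : (2 * algebraMap k (K4 k) c * bv k)⁻¹ ∈ A := by
    rw [mul_inv]; exact mul_mem h2cI hbiA
  have hb2I : ((bv k)^2)⁻¹ ∈ A := by
    rw [← inv_pow]; exact pow_mem hbiA 2
  have hPxA : wPx k c d e ∈ A :=
    add_mem (add_mem (mul_mem (hCm c) (pow_mem hxA 2)) (mul_mem (hCm d) hxA)) (hCm e)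
  have hOmA : wOm k c d e ∈ A :=
    add_mem (add_mem (mul_mem haA hxA) (mul_mem (pow_mem hbA 2) hyA)) (mul_mem hbA hPxA)
  have hGA : wG k c d e ∈ A := by
    refine sub_mem (add_mem ?_ ?_) ?_
    · exact hdiv _ _ (mul_mem (pow_mem haA 2) hyA) h2cI
    · exact hdiv _ _ (mul_mem (pow_mem haA 2) hPxA) h2cbI
    · exact hdiv _ _ (add_mem (add_mem (mul_mem (hCm c) (pow_mem hOmA 2))
        (mul_mem (mul_mem (hCm d) haA) hOmA)) (mul_mem (hCm e) (pow_mem haA 2))) h2cbI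
  have hG2A : wG2 k c d e ∈ A := by
    refine sub_mem (add_mem ?_ ?_) ?_
    · exact hdiv _ _ (mul_mem haA hyA) h2cI
    · exact hdiv _ _ (mul_mem haA hPxA) h2cbI
    · exact hdiv _ _ (add_mem (mul_mem (hCm d) hOmA) (mul_mem (hCm e) haA)) h2cbI
  have hMA : wM k c d e ∈ A := by
    refine add_mem ?_ ?_
    · exact mul_mem hOmA (add_mem (add_mem (mul_mem (mul_mem h2A (hCm c)) hOmA)
        (mul_mem (hCm d) haA)) (mul_mem (mul_mem (hCm c) (pow_mem haA 2)) hGA))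
    · exact add_mem (add_mem (mul_mem (hCm c)
        (pow_mem (add_mem hOmA (mul_mem (pow_mem haA 2) hGA)) 2))
        (mul_mem (mul_mem (hCm d) haA) (add_mem hOmA (mul_mem (pow_mem haA 2) hGA))))
        (mul_mem (hCm e) (pow_mem haA 2))
  have hHA : wH k c d e ∈ A := by
    refine sub_mem (sub_mem (sub_mem (sub_mem (sub_mem ?_ ?_) ?_) ?_) ?_) ?_
    · exact hdiv _ _ (mul_mem haA hGA) hb2I
    · exact hdiv _ _ (mul_mem (mul_mem (mul_mem h2A (hCm c)) hOmA) hG2A) hbiA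
    · exact hdiv _ _ (mul_mem (hCm d) hGA) hbiA
    · exact hdiv _ _ (mul_mem (mul_mem haA (hCm c)) (pow_mem hGA 2)) hbiA
    · exact hdiv _ _ (mul_mem (mul_mem haA hGA) hMA) hb2I
    · exact hdiv _ _ (mul_mem hOmA (add_mem (mul_mem (hCm d) hOmA)
        (mul_mem (hCm e) haA))) hb2I
  refine ⟨wH k c d e, hHA, ?_⟩
  have hPxe : pe16 k P (xv k) = wPx k c d e := by rw [hpe, wPx]
  have hOme : om16 k P = wOm k c d e := by rw [om16, hPxe, wOm]
  have hDelta : (av k) ^ 5 / (2 * algebraMap k (K4 k) c) * ta16 k P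
      = (av k) ^ 2 * wG k c d e := by
    rw [ta16, hOme, hPxe, hpe]
    exact stage2 (av k) (bv k) (algebraMap k (K4 k) c) (algebraMap k (K4 k) d)
      (algebraMap k (K4 k) e) (yv k) (wPx k c d e) (wOm k c d e) (wG k c d e)
      ha0 hb0 hcC h2C rfl
  have hrelK : wG k c d e = av k * wG2 k c d e - (wOm k c d e)^2 / (2 * bv k) :=
    stage1 (av k) (bv k) (algebraMap k (K4 k) c) (algebraMap k (K4 k) d)
      (algebraMap k (K4 k) e) (yv k) (wPx k c d e) (wOm k c d e) (wG k c d e)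
      (wG2 k c d e) ha0 hb0 hcC h2C rfl rfl
  rw [hOme, hDelta]
  simp only [Fbh16, Fb16]
  rw [hpe, hpe]
  exact stage3 (av k) (bv k) (algebraMap k (K4 k) c) (algebraMap k (K4 k) d)
    (algebraMap k (K4 k) e) (wOm k c d e) (wG2 k c d e) (wG k c d e) (wM k c d e)
    (wH k c d e) ha0 hb0 hcC h2C hrelK rfl rfl
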